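/- arXiv:1505.06145 — 8 statements merged into one kernel-verified Lean document; each statement's English description precedes it below -/
import Mathlib

section
/- Let n ≥ 3, let w : ZMod n → ℝ with w(i) > 0 for all i, where w(i) is the length of the cycle edge {i, i+1}, let c = ∑ᵢ w(i), and for i,j ∈ ZMod n let a(i,j) denote the sum of the edge lengths along the clockwise arc from i to j (so a(i,i) = 0). Define d(i,j) = min(a(i,j), c − a(i,j)), the shortest-path metric of the weighted cycle. If x,y,z ∈ ZMod n are pairwise distinct and d(x,y)+d(y,z)+d(z,x) = c, then there exists p ∈ ZMod n with d(x,p)+d(y,p)+d(z,p) = c/2 if and only if max{d(x,y), d(y,z), d(z,x)} = c/2. -/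
set_option linter.unusedSectionVars false

namespace CycleFourthAux

variable {n : ℕ} [NeZero n] {w : ZMod n → ℝ} {c : ℝ} {a d : ZMod n → ZMod n → ℝ}

lemma sum_total (w : ZMod n → ℝ) (i : ZMod n) :
    ∑ t ∈ Finset.range n, w (i + (t : ZMod n)) = ∑ j, w j := by
  rw [← Fin.sum_univ_eq_sum_range (fun t => w (i + (t : ZMod n))) n]
  refine Fintype.sum_bijective (fun t : Fin n => i + ((t : ℕ) : ZMod n)) ?_ _ _ (fun t => rfl)
  rw [Fintype.bijective_iff_injective_and_card]
  refine ⟨fun s t hst => ?_, by simp [ZMod.card]⟩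
  have h := add_left_cancel hst
  have hs : (((s : ℕ) : ZMod n)).val = (s : ℕ) := ZMod.val_cast_of_lt s.2
  have ht : (((t : ℕ) : ZMod n)).val = (t : ℕ) := ZMod.val_cast_of_lt t.2
  exact Fin.ext (by rw [← hs, ← ht, h])

lemma sum_split (w : ZMod n → ℝ) (i : ZMod n) (m k : ℕ) :
    ∑ t ∈ Finset.range (m + k), w (i + (t : ZMod n)) =
      (∑ t ∈ Finset.range m, w (i + (t : ZMod n)))
        + ∑ t ∈ Finset.range k, w ((i + (m : ZMod n)) + (t : ZMod n)) := by
  rw [Finset.sum_range_add]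
  congr 1
  refine Finset.sum_congr rfl fun t _ => ?_
  congr 1
  push_cast
  ring

lemma a_add (hc : c = ∑ i, w i)
    (ha : ∀ i j, a i j = ∑ t ∈ Finset.range ((j - i).val), w (i + (t : ZMod n)))
    (i j k : ZMod n) :
    a i j + a j k = a i k ∨ a i j + a j k = a i k + c := by
  have hvij : (((j - i).val : ℕ) : ZMod n) = j - i := by simp [ZMod.natCast_val, ZMod.cast_id]
  have hvjk : (((k - j).val : ℕ) : ZMod n) = k - j := by simp [ZMod.natCast_val, ZMod.cast_id]
  have hvik : (((k - i).val : ℕ) : ZMod n) = k - i := by simp [ZMod.natCast_val, ZMod.cast_id]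
  have hj : i + (((j - i).val : ℕ) : ZMod n) = j := by rw [hvij]; ring
  have hik : i + (((k - i).val : ℕ) : ZMod n) = k := by rw [hvik]; ring
  have key : a i j + a j k
      = ∑ t ∈ Finset.range ((j - i).val + (k - j).val), w (i + (t : ZMod n)) := by
    rw [sum_split, hj, ← ha i j, ← ha j k]
  have hmm : ((j - i).val + (k - j).val) % n = (k - i).val % n := by
    have hcast : ((((j - i).val + (k - j).val : ℕ)) : ZMod n) = (((k - i).val : ℕ) : ZMod n) := by
      push_cast
      rw [hvij, hvjk, hvik]
      ring
    exact (ZMod.natCast_eq_natCast_iff _ _ _).mp hcast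
  have h1 := ZMod.val_lt (j - i)
  have h2 := ZMod.val_lt (k - j)
  have h3 := ZMod.val_lt (k - i)
  have hcases : (j - i).val + (k - j).val = (k - i).val
      ∨ (j - i).val + (k - j).val = (k - i).val + n := by
    rcases Nat.lt_or_ge ((j - i).val + (k - j).val) n with hlt | hge
    · left
      rw [Nat.mod_eq_of_lt hlt, Nat.mod_eq_of_lt h3] at hmm
      exact hmm
    · right
      rw [Nat.mod_eq_sub_mod hge, Nat.mod_eq_of_lt (by omega), Nat.mod_eq_of_lt h3] at hmm
      omega
  rcases hcases with h | h
  · left; rw [key, h, ← ha]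
  · right; rw [key, h, sum_split, hik, ← ha i k, sum_total, hc]

lemma a_nonneg (hw : ∀ i, 0 < w i)
    (ha : ∀ i j, a i j = ∑ t ∈ Finset.range ((j - i).val), w (i + (t : ZMod n)))
    (i j : ZMod n) : 0 ≤ a i j := by
  rw [ha]
  exact Finset.sum_nonneg fun t _ => (hw _).le

lemma a_self
    (ha : ∀ i j, a i j = ∑ t ∈ Finset.range ((j - i).val), w (i + (t : ZMod n)))
    (i : ZMod n) : a i i = 0 := by
  rw [ha]
  simp

lemma a_pos (hw : ∀ i, 0 < w i)
    (ha : ∀ i j, a i j = ∑ t ∈ Finset.range ((j - i).val), w (i + (t : ZMod n)))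
    {i j : ZMod n} (h : i ≠ j) : 0 < a i j := by
  rw [ha]
  refine Finset.sum_pos (fun t _ => hw _) ?_
  rw [Finset.nonempty_range_iff]
  intro h0
  exact h (sub_eq_zero.mp ((ZMod.val_eq_zero _).mp h0)).symm

lemma a_cycle (hw : ∀ i, 0 < w i) (hc : c = ∑ i, w i)
    (ha : ∀ i j, a i j = ∑ t ∈ Finset.range ((j - i).val), w (i + (t : ZMod n)))
    {i j : ZMod n} (h : i ≠ j) : a i j + a j i = c := by
  rcases a_add hc ha i j i with h' | h'
  · exfalso
    have := a_pos hw ha h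
    have := a_pos hw ha (Ne.symm h)
    rw [a_self ha] at h'
    linarith
  · rw [a_self ha] at h'
    linarith

lemma c_pos (hw : ∀ i, 0 < w i) (hc : c = ∑ i, w i) : 0 < c := by
  rw [hc]
  exact Finset.sum_pos (fun i _ => hw i) Finset.univ_nonempty

lemma d_eq' (hw : ∀ i, 0 < w i) (hc : c = ∑ i, w i)
    (ha : ∀ i j, a i j = ∑ t ∈ Finset.range ((j - i).val), w (i + (t : ZMod n)))
    (hd : ∀ i j, d i j = min (a i j) (c - a i j))
    (i j : ZMod n) : d i j = min (a j i) (c - a j i) := by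
  rcases eq_or_ne i j with rfl | h
  · rw [hd]
  · have h1 : a j i = c - a i j := by linarith [a_cycle hw hc ha h]
    have h2 : c - (c - a i j) = a i j := by ring
    rw [hd, h1, h2, min_comm]

lemma d_symm (hw : ∀ i, 0 < w i) (hc : c = ∑ i, w i)
    (ha : ∀ i j, a i j = ∑ t ∈ Finset.range ((j - i).val), w (i + (t : ZMod n)))
    (hd : ∀ i j, d i j = min (a i j) (c - a i j))
    (i j : ZMod n) : d i j = d j i := by
  rw [d_eq' hw hc ha hd, hd]

lemma d_self (hw : ∀ i, 0 < w i) (hc : c = ∑ i, w i)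
    (ha : ∀ i j, a i j = ∑ t ∈ Finset.range ((j - i).val), w (i + (t : ZMod n)))
    (hd : ∀ i j, d i j = min (a i j) (c - a i j))
    (i : ZMod n) : d i i = 0 := by
  rw [hd, a_self ha]
  have := c_pos hw hc
  rw [min_eq_left (by linarith)]

/-- Helper: if `p` lies on the (clockwise) arc from `x` to `y`, and the
`d`-sum from `p` is `c/2`, then `a y z = c/2` or `a z x = c/2`. -/
lemma helper (hw : ∀ i, 0 < w i) (hc : c = ∑ i, w i)
    (ha : ∀ i j, a i j = ∑ t ∈ Finset.range ((j - i).val), w (i + (t : ZMod n)))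
    (hd : ∀ i j, d i j = min (a i j) (c - a i j))
    (x y z p : ZMod n) (hyz : y ≠ z) (hzx : z ≠ x)
    (hori : a x y + a y z + a z x = c)
    (h1 : a x y ≤ c / 2) (h2 : a y z ≤ c / 2) (h3 : a z x ≤ c / 2)
    (harc : a x p + a p y = a x y)
    (hp : d x p + d y p + d z p = c / 2) :
    a y z = c / 2 ∨ a z x = c / 2 := by
  have hβ : 0 < a y z := a_pos hw ha hyz
  have hγ : 0 < a z x := a_pos hw ha hzx
  have hs0 : 0 ≤ a x p := a_nonneg hw ha x p
  have hpy0 : 0 ≤ a p y := a_nonneg hw ha p y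
  have hzp0 : 0 ≤ a z p := a_nonneg hw ha z p
  have hsle : a x p ≤ a x y := by linarith
  -- a z p = a z x + a x p
  have hzp : a z p = a z x + a x p := by
    rcases a_add hc ha z x p with h | h
    · linarith
    · exfalso; linarith
  -- d x p = a x p
  have hdxp : d x p = a x p := by
    rw [hd, min_eq_left (by linarith)]
  -- d y p = a x y - a x p
  have hdyp : d y p = a x y - a x p := by
    rw [d_eq' hw hc ha hd]
    have hpy : a p y = a x y - a x p := by linarith
    rw [hpy, min_eq_left (by linarith)]
  -- d z p = min (a z x + a x p) (c - (a z x + a x p))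
  have hdzp : d z p = min (a z x + a x p) (c - (a z x + a x p)) := by
    rw [hd, hzp]
  rw [hdxp, hdyp, hdzp] at hp
  rcases min_choice (a z x + a x p) (c - (a z x + a x p)) with h | h <;> rw [h] at hp
  · left; linarith
  · right; linarith

lemma max3_eq {A B C m : ℝ} (h1 : A ≤ m) (h2 : B ≤ m) (h3 : C ≤ m)
    (h : A = m ∨ B = m ∨ C = m) : max A (max B C) = m := by
  refine le_antisymm (max_le h1 (max_le h2 h3)) ?_
  rcases h with h | h | h
  · exact h ▸ le_max_left _ _
  · exact h ▸ le_trans (le_max_left _ _) (le_max_right _ _)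
  · exact h ▸ le_trans (le_max_right _ _) (le_max_right _ _)

lemma max3_cases {A B C m : ℝ} (h : max A (max B C) = m) :
    (A ≤ m ∧ B ≤ m ∧ C ≤ m) ∧ (A = m ∨ B = m ∨ C = m) := by
  constructor
  · exact ⟨h ▸ le_max_left _ _,
      h ▸ le_trans (le_max_left _ _) (le_max_right _ _),
      h ▸ le_trans (le_max_right _ _) (le_max_right _ _)⟩
  · rcases max_choice A (max B C) with h' | h'
    · left; rw [← h, h']
    · rcases max_choice B C with h'' | h''
      · right; left; rw [← h, h', h'']
      · right; right; rw [← h, h', h'']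

/-- Forward direction, assuming the orientation `a x y + a y z + a z x = c`. -/
lemma fwd (hw : ∀ i, 0 < w i) (hc : c = ∑ i, w i)
    (ha : ∀ i j, a i j = ∑ t ∈ Finset.range ((j - i).val), w (i + (t : ZMod n)))
    (hd : ∀ i j, d i j = min (a i j) (c - a i j))
    (x y z : ZMod n) (hxy : x ≠ y) (hyz : y ≠ z) (hzx : z ≠ x)
    (hori : a x y + a y z + a z x = c)
    (hsum : d x y + d y z + d z x = c)
    (p : ZMod n) (hp : d x p + d y p + d z p = c / 2) :
    max (d x y) (max (d y z) (d z x)) = c / 2 := by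
  have hc0 := c_pos hw hc
  have l1 : d x y ≤ a x y := by rw [hd]; exact min_le_left _ _
  have l2 : d y z ≤ a y z := by rw [hd]; exact min_le_left _ _
  have l3 : d z x ≤ a z x := by rw [hd]; exact min_le_left _ _
  have e1 : d x y = a x y := by linarith
  have e2 : d y z = a y z := by linarith
  have e3 : d z x = a z x := by linarith
  have b1 : a x y ≤ c / 2 := by
    have h := hd x y
    rw [e1] at h
    have h' := min_le_right (a x y) (c - a x y)
    rw [← h] at h'
    linarith
  have b2 : a y z ≤ c / 2 := by
    have h := hd y z
    rw [e2] at h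
    have h' := min_le_right (a y z) (c - a y z)
    rw [← h] at h'
    linarith
  have b3 : a z x ≤ c / 2 := by
    have h := hd z x
    rw [e3] at h
    have h' := min_le_right (a z x) (c - a z x)
    rw [← h] at h'
    linarith
  -- locate p on one of the three arcs
  have pair_le : ∀ i : ZMod n, a i p + a p i ≤ c := by
    intro i
    rcases eq_or_ne i p with rfl | h
    · rw [a_self ha]; linarith
    · exact le_of_eq (a_cycle hw hc ha h)
  have hloc : a x p + a p y = a x y ∨ a y p + a p z = a y z ∨ a z p + a p x = a z x := by
    rcases a_add hc ha x p y with k1 | k1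
    · exact Or.inl k1
    rcases a_add hc ha y p z with k2 | k2
    · exact Or.inr (Or.inl k2)
    rcases a_add hc ha z p x with k3 | k3
    · exact Or.inr (Or.inr k3)
    exfalso
    have := pair_le x
    have := pair_le y
    have := pair_le z
    linarith
  rw [e1, e2, e3]
  rcases hloc with harc | harc | harc
  · rcases helper hw hc ha hd x y z p hyz hzx hori b1 b2 b3 harc hp with h | h
    · exact max3_eq b1 b2 b3 (Or.inr (Or.inl h))
    · exact max3_eq b1 b2 b3 (Or.inr (Or.inr h))
  · rcases helper hw hc ha hd y z x p hzx hxy (by linarith) b2 b3 b1 harc (by linarith) with h | h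
    · exact max3_eq b1 b2 b3 (Or.inr (Or.inr h))
    · exact max3_eq b1 b2 b3 (Or.inl h)
  · rcases helper hw hc ha hd z x y p hxy hyz (by linarith) b3 b1 b2 harc (by linarith) with h | h
    · exact max3_eq b1 b2 b3 (Or.inl h)
    · exact max3_eq b1 b2 b3 (Or.inr (Or.inl h))

end CycleFourthAux

open CycleFourthAux in
/-- In a positively weighted cycle on `n ≥ 3` vertices (identified with `ZMod n`), with
clockwise arc lengths `a`, total length `c` and shortest-path metric
`d i j = min (a i j) (c - a i j)`: for pairwise distinct `x, y, z` whose pairwise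
distances sum to `c`, a fourth point `p` (with `d x p + d y p + d z p = c / 2`) exists
iff the largest of the three distances equals `c / 2`. -/
theorem cycle_fourth_point_iff_max_eq_half
    (n : ℕ) [NeZero n] (hn : 3 ≤ n)
    (w : ZMod n → ℝ) (hw : ∀ i, 0 < w i)
    (c : ℝ) (hc : c = ∑ i, w i)
    (a : ZMod n → ZMod n → ℝ)
    (ha : ∀ i j, a i j = ∑ t ∈ Finset.range ((j - i).val), w (i + (t : ZMod n)))
    (d : ZMod n → ZMod n → ℝ)
    (hd : ∀ i j, d i j = min (a i j) (c - a i j))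
    (x y z : ZMod n) (hxy : x ≠ y) (hyz : y ≠ z) (hzx : z ≠ x)
    (hsum : d x y + d y z + d z x = c) :
    (∃ p : ZMod n, d x p + d y p + d z p = c / 2) ↔
      max (d x y) (max (d y z) (d z x)) = c / 2 := by
  have hc0 := c_pos hw hc
  have dsym := d_symm hw hc ha hd
  have dself := d_self hw hc ha hd
  constructor
  · rintro ⟨p, hp⟩
    -- orientation case split
    have hxz : x ≠ z := Ne.symm hzx
    have hcyc := a_cycle hw hc ha hxz
    have hcyc2 := a_cycle hw hc ha hxy
    have hcyc3 := a_cycle hw hc ha hyz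
    rcases a_add hc ha x y z with h | h
    · exact fwd hw hc ha hd x y z hxy hyz hzx (by linarith) hsum p hp
    · -- reversed orientation: a x z + a z y + a y x = c
      have hori' : a x z + a z y + a y x = c := by linarith
      have hres := fwd hw hc ha hd x z y hxz (Ne.symm hyz) (Ne.symm hxy) hori'
          (by rw [dsym x z, dsym z y, dsym y x]; linarith)
          p (by linarith)
      obtain ⟨⟨m1, m2, m3⟩, hor⟩ := max3_cases hres
      rw [dsym x z] at m1 hor
      rw [dsym z y] at m2 hor
      rw [dsym y x] at m3 hor
      apply max3_eq m3 m2 m1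
      tauto
  · intro hmax
    obtain ⟨⟨m1, m2, m3⟩, hor⟩ := max3_cases hmax
    rcases hor with h | h | h
    · refine ⟨z, ?_⟩
      rw [dsym x z, dself z]
      linarith
    · refine ⟨x, ?_⟩
      rw [dself x, dsym y x]
      linarith
    · refine ⟨y, ?_⟩
      rw [dself y, dsym z y]
      linarith
end

section
/- Let (X,d) be a metric space whose underlying set X is finite and nonempty, and let x,y,z ∈ X be pairwise distinct. If the three pairs {x,y}, {y,z}, and {z,x} are all basic edges, then there is no point p ∈ X with d(x,p)+d(y,p)+d(z,p) = (d(x,y)+d(y,z)+d(z,x))/2. -/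
/-- A chain of intermediate points witnessing that the pair `{x, x'}` is non-basic:
`k ≥ 1` pairwise distinct intermediate points, each different from `x` and `x'`,
along which the distances sum to `dist x x'`. -/
lemma chain3 {X : Type*} [MetricSpace X] (a b c : X)
    (hab : a ≠ b) (hca : c ≠ a) (hcb : c ≠ b)
    (h : dist a b = dist a c + dist c b) :
    ∃ (k : ℕ) (p : Fin (k + 2) → X), 1 ≤ k ∧ Function.Injective p ∧
      p 0 = a ∧ p (Fin.last (k + 1)) = b ∧
      dist a b = ∑ i : Fin (k + 1), dist (p i.castSucc) (p i.succ) := by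
  refine ⟨1, ![a, c, b], le_refl 1, ?_, rfl, rfl, ?_⟩
  · intro i j hij
    fin_cases i <;> fin_cases j <;> simp_all
  · simp [Fin.sum_univ_succ]
    convert h using 2

def IsNonBasicChain {X : Type*} [MetricSpace X] (x x' : X) : Prop :=
  ∃ (k : ℕ) (p : Fin (k + 2) → X), 1 ≤ k ∧ Function.Injective p ∧
    p 0 = x ∧ p (Fin.last (k + 1)) = x' ∧
    dist x x' = ∑ i : Fin (k + 1), dist (p i.castSucc) (p i.succ)

/-- The unordered pair `{x, x'}` is a non-basic edge. -/
def IsNonBasicEdge {X : Type*} [MetricSpace X] (x x' : X) : Prop :=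
  IsNonBasicChain x x' ∨ IsNonBasicChain x' x

/-- The unordered pair `{x, x'}` is a basic edge. -/
def IsBasicEdge {X : Type*} [MetricSpace X] (x x' : X) : Prop :=
  x ≠ x' ∧ ¬ IsNonBasicEdge x x'

/-- If the three pairs `{x,y}`, `{y,z}`, `{z,x}` of pairwise distinct points are all
basic edges, then no fourth point exists for `{x, y, z}`. -/
theorem no_fourth_point_of_basic_triangle
    {X : Type*} [MetricSpace X] [Fintype X] [Nonempty X] (x y z : X)
    (hxy : x ≠ y) (hyz : y ≠ z) (hzx : z ≠ x)
    (hb₁ : IsBasicEdge x y) (hb₂ : IsBasicEdge y z) (hb₃ : IsBasicEdge z x) :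
    ¬ ∃ p : X, dist x p + dist y p + dist z p =
      (dist x y + dist y z + dist z x) / 2 := by
  rintro ⟨p, hp⟩
  have t1 : dist x y ≤ dist x p + dist y p := by
    have := dist_triangle x p y; rw [dist_comm p y] at this; linarith
  have t2 : dist y z ≤ dist y p + dist z p := by
    have := dist_triangle y p z; rw [dist_comm p z] at this; linarith
  have t3 : dist z x ≤ dist z p + dist x p := by
    have := dist_triangle z p x; rw [dist_comm p x] at this; linarith
  have e1 : dist x y = dist x p + dist p y := by
    rw [dist_comm p y]; linarith
  have e2 : dist y z = dist y p + dist p z := by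
    rw [dist_comm p z]; linarith
  have e3 : dist z x = dist z p + dist p x := by
    rw [dist_comm p x]; linarith
  by_cases hpx : p = x
  · subst hpx
    exact hb₂.2 (Or.inl (chain3 y z p hyz hxy hzx.symm
      (by rw [dist_comm y p] at e2; linarith)))
  by_cases hpy : p = y
  · subst hpy
    exact hb₃.2 (Or.inl (chain3 z x p hzx hyz hxy.symm
      (by rw [dist_comm z p] at e3; linarith)))
  by_cases hpz : p = z
  · subst hpz
    exact hb₁.2 (Or.inl (chain3 x y p hxy hzx hyz.symm
      (by rw [dist_comm x p] at e1; linarith)))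
  · exact hb₁.2 (Or.inl (chain3 x y p hxy hpx hpy e1))
end

section
/- Let (X,d) be a metric space whose underlying set X is finite and nonempty, let x,y,z ∈ X be pairwise distinct, and suppose p ∈ X satisfies d(x,p)+d(y,p)+d(z,p) = (d(x,y)+d(y,z)+d(z,x))/2 and p ∉ {x,y,z}. Then each of the three pairs {x,y}, {y,z}, and {z,x} is a non-basic edge. -/
lemma chain_of_mid {X : Type*} [MetricSpace X] (x y p : X)
    (hxy : x ≠ y) (hpx : p ≠ x) (hpy : p ≠ y)
    (h : dist x y = dist x p + dist p y) : IsNonBasicChain x y := by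
  refine ⟨1, ![x, p, y], le_refl 1, ?_, rfl, rfl, ?_⟩
  · intro i j hij
    fin_cases i <;> fin_cases j <;> simp_all [Matrix.cons_val_zero, Matrix.cons_val_one]
  · simpa [Fin.sum_univ_two] using h

/-- If a fourth point `p ∉ {x, y, z}` exists for a triple of pairwise distinct points,
then each of the three pairs `{x,y}`, `{y,z}`, `{z,x}` is a non-basic edge. -/
theorem nonBasic_of_external_fourth_point
    {X : Type*} [MetricSpace X] [Fintype X] [Nonempty X] (x y z p : X)
    (hxy : x ≠ y) (hyz : y ≠ z) (hzx : z ≠ x)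
    (hp : dist x p + dist y p + dist z p = (dist x y + dist y z + dist z x) / 2)
    (hpx : p ≠ x) (hpy : p ≠ y) (hpz : p ≠ z) :
    IsNonBasicEdge x y ∧ IsNonBasicEdge y z ∧ IsNonBasicEdge z x := by
  have t1 : dist x y ≤ dist x p + dist p y := dist_triangle x p y
  have t2 : dist y z ≤ dist y p + dist p z := dist_triangle y p z
  have t3 : dist z x ≤ dist z p + dist p x := dist_triangle z p x
  have e1 : dist x y = dist x p + dist p y := by
    by_contra h
    have := dist_comm p x; have := dist_comm p y; have := dist_comm p z
    nlinarith [lt_of_le_of_ne t1 h]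
  have e2 : dist y z = dist y p + dist p z := by
    by_contra h
    have := dist_comm p x; have := dist_comm p y; have := dist_comm p z
    nlinarith [lt_of_le_of_ne t2 h]
  have e3 : dist z x = dist z p + dist p x := by
    by_contra h
    have := dist_comm p x; have := dist_comm p y; have := dist_comm p z
    nlinarith [lt_of_le_of_ne t3 h]
  exact ⟨Or.inl (chain_of_mid x y p hxy hpx hpy e1),
         Or.inl (chain_of_mid y z p hyz hpy hpz e2),
         Or.inl (chain_of_mid z x p hzx hpz hpx e3)⟩
end

section
/- Let (X,d) be a metric space whose underlying set X is finite and nonempty. Then for every pair of distinct points x, x' ∈ X there exist m ≥ 1 and pairwise distinct points x = p₀, p₁, …, p_m = x' in X such that every consecutive pair {pᵢ, pᵢ₊₁} is a basic edge and ∑_{i=0}^{m−1} d(pᵢ, pᵢ₊₁) = d(x, x'). In particular, the basic geodesic graph of (X,d) is connected and its shortest-path metric (with each basic edge {a,b} given length d(a,b)) realises d. -/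
/-- The basic geodesic graph: the simple graph on `X` whose edges are the basic edges. -/
def basicGeodesicGraph (X : Type*) [MetricSpace X] : SimpleGraph X where
  Adj x y := IsBasicEdge x y
  symm := ⟨fun x y ⟨h1, h2⟩ => ⟨h1.symm, fun h => h2 h.symm⟩⟩
  loopless := ⟨fun x ⟨h1, _⟩ => h1 rfl⟩

lemma Fin.dist_le_sum_dist {X : Type*} [PseudoMetricSpace X] :
    ∀ {n : ℕ} (p : Fin (n + 1) → X),
      dist (p 0) (p (Fin.last n)) ≤ ∑ i : Fin n, dist (p i.castSucc) (p i.succ)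
  | 0, _ => by simp
  | n + 1, p => by
    rw [Fin.sum_univ_castSucc]
    calc dist (p 0) (p (Fin.last (n + 1)))
        ≤ dist (p 0) (p (Fin.last n).castSucc)
          + dist (p (Fin.last n).castSucc) (p (Fin.last n).succ) := by
          rw [Fin.succ_last]; exact dist_triangle _ _ _
      _ ≤ _ := by
          gcongr
          exact Fin.dist_le_sum_dist (fun i => p i.castSucc)

lemma IsNonBasicChain.exists_between {X : Type*} [MetricSpace X] {x x' : X}
    (h : IsNonBasicChain x x') :
    ∃ y, y ≠ x ∧ y ≠ x' ∧ dist x y + dist y x' = dist x x' := by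
  obtain ⟨k, p, hk, hinj, rfl, rfl, hsum⟩ := h
  refine ⟨p (0 : Fin (k + 1)).succ, hinj.ne (Fin.succ_ne_zero _), hinj.ne ?_, ?_⟩
  · rw [← Fin.succ_last, Ne, Fin.succ_inj, Fin.ext_iff]
    simp only [Fin.val_zero, Fin.val_last]
    omega
  · have htail := Fin.dist_le_sum_dist fun i : Fin (k + 1) => p i.succ
    rw [Fin.sum_univ_succ, Fin.castSucc_zero] at hsum
    simp only [Fin.succ_last, Fin.succ_castSucc, Nat.succ_eq_add_one] at htail
    linarith [dist_triangle (p 0) (p (0 : Fin (k + 1)).succ) (p (Fin.last (k + 1)))]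

lemma IsNonBasicEdge.exists_between {X : Type*} [MetricSpace X] {x x' : X}
    (h : IsNonBasicEdge x x') :
    ∃ y, y ≠ x ∧ y ≠ x' ∧ dist x y + dist y x' = dist x x' := by
  rcases h with h | h
  · exact h.exists_between
  · obtain ⟨y, hyx', hyx, hy⟩ := h.exists_between
    exact ⟨y, hyx, hyx', by linarith [dist_comm x y, dist_comm y x', dist_comm x x']⟩

section MetricLength

variable {X : Type*} [PseudoMetricSpace X] {G : SimpleGraph X}

def metricLength {u v : X} (p : G.Walk u v) : ℝ :=
  (p.darts.map fun d => dist d.fst d.snd).sum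

@[simp]
lemma metricLength_nil {u : X} : metricLength (SimpleGraph.Walk.nil : G.Walk u u) = 0 := rfl

@[simp]
lemma metricLength_cons {u v w : X} (h : G.Adj u v) (p : G.Walk v w) :
    metricLength (SimpleGraph.Walk.cons h p) = dist u v + metricLength p := by
  simp [metricLength]

lemma metricLength_append {u v w : X} (p : G.Walk u v) (q : G.Walk v w) :
    metricLength (p.append q) = metricLength p + metricLength q := by
  simp [metricLength]

lemma dist_le_metricLength {u v : X} (p : G.Walk u v) : dist u v ≤ metricLength p := by
  induction p with
  | nil => simp
  | cons h p ih =>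
    rw [metricLength_cons]
    exact (dist_triangle _ _ _).trans (by gcongr)

lemma metricLength_bypass_le [DecidableEq X] {u v : X} (p : G.Walk u v) :
    metricLength p.bypass ≤ metricLength p :=
  ((SimpleGraph.Walk.darts_bypass_sublist_darts p).map _).sum_le_sum (by simp)

lemma metricLength_eq_sum_getVert {u v : X} (p : G.Walk u v) :
    metricLength p = ∑ i : Fin p.length, dist (p.getVert i) (p.getVert (i + 1)) := by
  induction p with
  | nil => simp
  | cons h p ih =>
    rw [metricLength_cons, ih, SimpleGraph.Walk.length_cons, Fin.sum_univ_succ]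
    simp [SimpleGraph.Walk.getVert_cons_succ]

end MetricLength

section MetricInterval

variable {X : Type*} [MetricSpace X]

def metricInterval (x x' : X) : Set X := {z | dist x z + dist z x' = dist x x'}

@[simp]
lemma mem_metricInterval {x x' z : X} :
    z ∈ metricInterval x x' ↔ dist x z + dist z x' = dist x x' := Iff.rfl

lemma metricInterval_ssubset_left {x y x' : X} (hy : y ∈ metricInterval x x') (hyx' : y ≠ x') :
    metricInterval x y ⊂ metricInterval x x' := by
  rw [mem_metricInterval] at hy
  have hsub : metricInterval x y ⊆ metricInterval x x' := fun z hz => by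
    rw [mem_metricInterval] at hz ⊢
    linarith [dist_triangle x z x', dist_triangle z y x', dist_triangle x y x']
  refine (Set.ssubset_iff_of_subset hsub).2 ⟨x', by simp, fun hx' => hyx' ?_⟩
  rw [mem_metricInterval] at hx'
  exact dist_eq_zero.1 (by linarith [dist_comm x' y, dist_nonneg (x := y) (y := x')])

lemma metricInterval_ssubset_right {x y x' : X} (hy : y ∈ metricInterval x x') (hyx : y ≠ x) :
    metricInterval y x' ⊂ metricInterval x x' := by
  rw [mem_metricInterval] at hy
  have hsub : metricInterval y x' ⊆ metricInterval x x' := fun z hz => by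
    rw [mem_metricInterval] at hz ⊢
    linarith [dist_triangle x z x', dist_triangle x y z, dist_triangle x y x']
  refine (Set.ssubset_iff_of_subset hsub).2 ⟨x, by simp, fun hx => hyx ?_⟩
  rw [mem_metricInterval] at hx
  exact (dist_eq_zero.1 (by linarith [dist_comm x y, dist_nonneg (x := x) (y := y)])).symm

end MetricInterval

theorem exists_walk_basicGeodesicGraph_metricLength_eq_dist {X : Type*} [MetricSpace X]
    [Finite X] (x x' : X) :
    ∃ p : (basicGeodesicGraph X).Walk x x', metricLength p = dist x x' := by
  induction hn : (metricInterval x x').ncard using Nat.strong_induction_on generalizing x x' with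
  | _ n ih =>
  by_cases hxx' : x = x'
  · subst hxx'
    exact ⟨.nil, by simp⟩
  by_cases hnonbasic : IsNonBasicEdge x x'
  · obtain ⟨y, hyx, hyx', hy⟩ := hnonbasic.exists_between
    obtain ⟨p, hp⟩ := ih _ (hn ▸ Set.ncard_lt_ncard (metricInterval_ssubset_left hy hyx')) x y rfl
    obtain ⟨q, hq⟩ := ih _ (hn ▸ Set.ncard_lt_ncard (metricInterval_ssubset_right hy hyx)) y x' rfl
    exact ⟨p.append q, by rw [metricLength_append, hp, hq, hy]⟩
  · have hadj : (basicGeodesicGraph X).Adj x x' := ⟨hxx', hnonbasic⟩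
    exact ⟨hadj.toWalk, by simp [SimpleGraph.Adj.toWalk]⟩

theorem exists_isPath_basicGeodesicGraph_metricLength_eq_dist {X : Type*} [MetricSpace X]
    [Finite X] (x x' : X) :
    ∃ p : (basicGeodesicGraph X).Walk x x', p.IsPath ∧ metricLength p = dist x x' := by
  classical
  obtain ⟨p, hp⟩ := exists_walk_basicGeodesicGraph_metricLength_eq_dist x x'
  exact ⟨p.bypass, p.bypass_isPath,
    le_antisymm (hp ▸ metricLength_bypass_le p) (dist_le_metricLength _)⟩

/-- Any two distinct points of a finite metric space are joined by a path of basic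
edges whose total length is the distance between them; in particular the basic
geodesic graph is connected (and, since each basic edge `{a,b}` has length
`dist a b`, its shortest-path metric realises `d`). -/
theorem basicGeodesicGraph_connected_realises
    {X : Type*} [MetricSpace X] [Fintype X] [Nonempty X] :
    (∀ x x' : X, x ≠ x' →
      ∃ (m : ℕ) (p : Fin (m + 1) → X), 1 ≤ m ∧ Function.Injective p ∧
        p 0 = x ∧ p (Fin.last m) = x' ∧
        (∀ i : Fin m, IsBasicEdge (p i.castSucc) (p i.succ)) ∧
        ∑ i : Fin m, dist (p i.castSucc) (p i.succ) = dist x x') ∧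
    (basicGeodesicGraph X).Connected := by
  refine ⟨fun x x' hne => ?_, (SimpleGraph.connected_iff _).2 ⟨fun x x' => ?_, inferInstance⟩⟩
  · obtain ⟨p, hpath, hlen⟩ := exists_isPath_basicGeodesicGraph_metricLength_eq_dist x x'
    refine ⟨p.length, fun i => p.getVert i, ?_, ?_, by simp, by simp, ?_, ?_⟩
    · exact Nat.one_le_iff_ne_zero.2 fun h => hne (p.eq_of_length_eq_zero h)
    · exact fun i j hij => Fin.ext (hpath.getVert_injOn i.is_le j.is_le hij)
    · exact fun i => p.adj_getVert_succ i.isLt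
    · simpa [metricLength_eq_sum_getVert] using hlen
  · obtain ⟨p, -⟩ := exists_walk_basicGeodesicGraph_metricLength_eq_dist x x'
    exact p.reachable
end

section
/- Let (X,d) be a metric space whose underlying set X is finite and nonempty, and suppose the basic geodesic graph G of (X,d) is a tree (connected and acyclic). Then G is the unique minimum spanning tree of the complete graph on X with edge weights d: for every tree T on vertex set X whose edge set differs from the set of basic edges, the total weight ∑_{{a,b} ∈ E(T)} d(a,b) is strictly greater than ∑_{{a,b} basic} d(a,b). -/
/-!
Since `X` is finite, some connected spanning graph `M` has least total length; distances between
distinct points are positive, so `M` is a tree. Every edge `{x, x'}` of `M` is basic: deleting it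
cuts `M` in two, a non-basic chain from `x` to `x'` has a step `{a, b}` crossing the cut, and that
step is strictly shorter than `d(x, x')`, so exchanging the two edges would shorten `M`. A tree
made of basic edges is the basic geodesic graph, as the latter is a tree. A spanning tree `T` as
short as the basic geodesic graph is then itself of least length, hence equal to it.
-/

namespace SimpleGraph

variable {V : Type*} (w : Sym2 V → ℝ)

noncomputable def totalWeight (G : SimpleGraph V) : ℝ := ∑ᶠ e ∈ G.edgeSet, w e

def IsMinWeightConnected (G : SimpleGraph V) : Prop :=
  G.Connected ∧ ∀ G' : SimpleGraph V, G'.Connected → totalWeight w G ≤ totalWeight w G'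

variable {w} {G : SimpleGraph V}

lemma Connected.reachable_or_reachable_deleteEdges (hG : G.Connected) (x y v : V) :
    (G.deleteEdges {s(x, y)}).Reachable v x ∨ (G.deleteEdges {s(x, y)}).Reachable v y := by
  induction (reachable_iff_reflTransGen v x).1 (hG.preconnected v x)
    using Relation.ReflTransGen.head_induction_on with
  | refl => exact .inl .rfl
  | @head u a hua _ ih =>
    by_cases hxy : s(u, a) = s(x, y)
    · rcases Sym2.eq_iff.1 hxy with ⟨rfl, -⟩ | ⟨rfl, -⟩
      exacts [.inl .rfl, .inr .rfl]
    · have hua' : (G.deleteEdges {s(x, y)}).Adj u a := deleteEdges_adj.2 ⟨hua, hxy⟩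
      exact ih.imp hua'.reachable.trans hua'.reachable.trans

variable [Finite V]

lemma totalWeight_deleteEdges_add {e : Sym2 V} (he : e ∈ G.edgeSet) :
    totalWeight w (G.deleteEdges {e}) + w e = totalWeight w G := by
  rw [totalWeight, totalWeight, edgeSet_deleteEdges, add_comm,
    ← finsum_mem_insert w (fun h => h.2 rfl) (Set.toFinite _), Set.insert_sdiff_singleton,
    Set.insert_eq_of_mem he]

lemma totalWeight_sup_edge {a b : V} (hab : a ≠ b) (he : s(a, b) ∉ G.edgeSet) :
    totalWeight w (G ⊔ edge a b) = w s(a, b) + totalWeight w G := by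
  rw [totalWeight, totalWeight, edgeSet_sup, edgeSet_edge_of_ne hab, Set.union_singleton,
    finsum_mem_insert w he (Set.toFinite _)]

variable (w) in
lemma Connected.exists_isMinWeightConnected (hG : G.Connected) :
    ∃ M : SimpleGraph V, IsMinWeightConnected w M := by
  have : Nonempty {M : SimpleGraph V // M.Connected} := ⟨⟨G, hG⟩⟩
  obtain ⟨⟨M, hM⟩, hmin⟩ :=
    Finite.exists_min fun M : {M : SimpleGraph V // M.Connected} => totalWeight w M.1
  exact ⟨M, hM, fun M' hM' => hmin ⟨M', hM'⟩⟩

lemma IsMinWeightConnected.isAcyclic (hG : IsMinWeightConnected w G)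
    (hw : ∀ e ∈ G.edgeSet, 0 < w e) : G.IsAcyclic := by
  refine isAcyclic_iff_forall_adj_isBridge.2 fun x y hxy => by_contra fun hbr => ?_
  have hle := hG.2 _ (hG.1.connected_delete_edge_of_not_isBridge hbr)
  linarith [totalWeight_deleteEdges_add (w := w) (G.mem_edgeSet.2 hxy), hw s(x, y) hxy]

/-- The cut property of minimum spanning trees. -/
lemma IsMinWeightConnected.le_of_reachable_of_not_reachable (hG : IsMinWeightConnected w G)
    {x y a b : V} (hxy : G.Adj x y) (ha : (G.deleteEdges {s(x, y)}).Reachable x a)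
    (hb : ¬ (G.deleteEdges {s(x, y)}).Reachable x b) : w s(x, y) ≤ w s(a, b) := by
  set H := G.deleteEdges {s(x, y)}
  have hab : a ≠ b := by rintro rfl; exact hb ha
  have hab_notMem : s(a, b) ∉ H.edgeSet := fun h => hb (ha.trans (Adj.reachable h))
  have hby : H.Reachable b y := (hG.1.reachable_or_reachable_deleteEdges x y b).resolve_left
    fun hbx => hb hbx.symm
  have hHG' : H ≤ H ⊔ edge a b := le_sup_left
  have hab' : (H ⊔ edge a b).Adj a b := Or.inr ((edge_adj a b a b).2 ⟨.inl ⟨rfl, rfl⟩, hab⟩)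
  have hG' : (H ⊔ edge a b).Connected := by
    refine (connected_iff_exists_forall_reachable _).2 ⟨x, fun v => ?_⟩
    rcases hG.1.reachable_or_reachable_deleteEdges x y v with hv | hv
    · exact (hv.mono hHG').symm
    · exact (ha.mono hHG').trans (hab'.reachable.trans ((hby.trans hv.symm).mono hHG'))
  have hle := hG.2 _ hG'
  rw [totalWeight_sup_edge hab hab_notMem,
    ← totalWeight_deleteEdges_add (G.mem_edgeSet.2 hxy)] at hle
  linarith

end SimpleGraph

open SimpleGraph

lemma Fin.exists_castSucc_and_not_succ {n : ℕ} (P : Fin (n + 1) → Prop) (h0 : P 0)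
    (hn : ¬ P (Fin.last n)) : ∃ i : Fin n, P i.castSucc ∧ ¬ P i.succ := by
  by_contra! h
  exact hn (Fin.induction h0 h (Fin.last n))

section Metric

variable {X : Type*} [MetricSpace X]

noncomputable def edgeLength : Sym2 X → ℝ := Sym2.lift ⟨dist, fun a b => dist_comm a b⟩

lemma edgeLength_pos_of_mem_edgeSet {G : SimpleGraph X} {e : Sym2 X} (he : e ∈ G.edgeSet) :
    0 < edgeLength e := by
  induction e using Sym2.ind with
  | _ a b => exact dist_pos.2 (G.ne_of_adj he)

lemma IsNonBasicChain.exists_dist_lt_of_mem_of_notMem {x x' : X} (hc : IsNonBasicChain x x')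
    {s : Set X} (hx : x ∈ s) (hx' : x' ∉ s) : ∃ a ∈ s, ∃ b ∉ s, dist a b < dist x x' := by
  obtain ⟨k, p, hk, hinj, rfl, rfl, hsum⟩ := hc
  obtain ⟨i, hi, hi'⟩ := Fin.exists_castSucc_and_not_succ (fun j => p j ∈ s) hx hx'
  refine ⟨_, hi, _, hi', ?_⟩
  have hpos (j : Fin (k + 1)) : 0 < dist (p j.castSucc) (p j.succ) :=
    dist_pos.2 (hinj.ne Fin.castSucc_lt_succ.ne)
  have : Nontrivial (Fin (k + 1)) := Fin.nontrivial_iff_two_le.2 (by omega)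
  obtain ⟨j, hji⟩ := exists_ne i
  rw [hsum]
  exact Finset.single_lt_sum hji (Finset.mem_univ _) (Finset.mem_univ _) (hpos j)
    fun l _ _ => (hpos l).le

variable [Finite X] {M : SimpleGraph X}

lemma SimpleGraph.IsMinWeightConnected.not_isNonBasicChain
    (hM : IsMinWeightConnected edgeLength M) {x x' : X} (h : M.Adj x x') :
    ¬ IsNonBasicChain x x' := by
  intro hc
  have hbr : M.IsBridge s(x, x') := isAcyclic_iff_forall_adj_isBridge.1
    (hM.isAcyclic fun _ => edgeLength_pos_of_mem_edgeSet) h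
  obtain ⟨a, ha, b, hb, hlt⟩ := hc.exists_dist_lt_of_mem_of_notMem
    (s := {v | (M.deleteEdges {s(x, x')}).Reachable x v}) .rfl (isBridge_iff.1 hbr)
  exact (hM.le_of_reachable_of_not_reachable h ha hb).not_gt hlt

lemma SimpleGraph.IsMinWeightConnected.le_basicGeodesicGraph
    (hM : IsMinWeightConnected edgeLength M) : M ≤ basicGeodesicGraph X :=
  fun _ _ h => ⟨h.ne, fun hnb =>
    hnb.elim (hM.not_isNonBasicChain h) (hM.not_isNonBasicChain h.symm)⟩

lemma SimpleGraph.IsMinWeightConnected.eq_basicGeodesicGraph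
    (hM : IsMinWeightConnected edgeLength M) (hG : (basicGeodesicGraph X).IsTree) :
    M = basicGeodesicGraph X :=
  (isTree_iff_minimal_connected.1 hG).eq_of_le hM.1 hM.le_basicGeodesicGraph

end Metric

theorem basicGeodesicGraph_unique_mst_general
    {X : Type*} [MetricSpace X] [Fintype X]
    (hG : (basicGeodesicGraph X).IsTree)
    (T : SimpleGraph X) (hT : T.IsTree)
    (hne : T.edgeSet ≠ (basicGeodesicGraph X).edgeSet) :
    ∑ᶠ e ∈ (basicGeodesicGraph X).edgeSet,
        Sym2.lift ⟨dist, fun a b => dist_comm a b⟩ e <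
      ∑ᶠ e ∈ T.edgeSet, Sym2.lift ⟨dist, fun a b => dist_comm a b⟩ e := by
  change totalWeight edgeLength _ < totalWeight edgeLength T
  obtain ⟨M, hM⟩ := hG.connected.exists_isMinWeightConnected edgeLength
  obtain rfl := hM.eq_basicGeodesicGraph hG
  refine (hM.2 T hT.connected).lt_of_ne fun heq => hne ?_
  have hTmin : IsMinWeightConnected edgeLength T := ⟨hT.connected, fun S hS => heq ▸ hM.2 S hS⟩
  rw [hTmin.eq_basicGeodesicGraph hG]

/-- If the basic geodesic graph is a tree, it is the unique minimum spanning tree of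
the weighted complete graph on `X`: any other spanning tree is strictly longer. -/
theorem basicGeodesicGraph_unique_mst
    {X : Type*} [MetricSpace X] [Fintype X] [Nonempty X]
    (hG : (basicGeodesicGraph X).IsTree)
    (T : SimpleGraph X) (hT : T.IsTree)
    (hne : T.edgeSet ≠ (basicGeodesicGraph X).edgeSet) :
    ∑ᶠ e ∈ (basicGeodesicGraph X).edgeSet,
        Sym2.lift ⟨dist, fun a b => dist_comm a b⟩ e <
      ∑ᶠ e ∈ T.edgeSet, Sym2.lift ⟨dist, fun a b => dist_comm a b⟩ e :=
  basicGeodesicGraph_unique_mst_general hG T hT hne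
end

section
/- Let (X,d) be a metric space whose underlying set X is finite and nonempty, and suppose (X,d) satisfies the tie-breaking rule. If (X,d) satisfies the fourth-point condition, then the basic geodesic graph of (X,d) is a tree (connected and acyclic). -/
/-- The fourth-point condition. -/
def FourthPointCondition (X : Type*) [MetricSpace X] : Prop :=
  ∀ x y z : X, ∃ p : X,
    dist x p + dist y p + dist z p = (dist x y + dist y z + dist z x) / 2

/-- The tie-breaking rule: distances of distinct unordered pairs are distinct. -/
def TieBreakingRule (X : Type*) [MetricSpace X] : Prop :=
  ∀ x y u v : X, x ≠ y → u ≠ v → ({x, y} : Set X) ≠ {u, v} → dist x y ≠ dist u v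

/-!
A non-basic pair `x, y` has a point strictly between them, which splits it into two strictly
shorter pairs; induction over the finitely many distances makes the graph connected.

If `{a, b}` is a basic edge, the median of `a, b, w` provided by the fourth-point condition lies
between `a` and `b`, so it is `a` or `b`: every point lies beyond `b` as seen from `a`, or beyond
`a` as seen from `b`, and a step shorter than `dist a b` cannot switch between the two. By the
tie-breaking rule the longest edge `{a, b}` of a cycle is strictly longer than all its other edges,
and these would lead from `b` back to `a`.
-/

section Geodesic

variable {X : Type*} [MetricSpace X]

def MetricSbtw (x y z : X) : Prop := y ≠ x ∧ y ≠ z ∧ dist x y + dist y z = dist x z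

theorem MetricSbtw.symm {x y z : X} (h : MetricSbtw x y z) : MetricSbtw z y x :=
  ⟨h.2.1, h.1, by rw [dist_comm z, dist_comm y x, dist_comm z x, add_comm]; exact h.2.2⟩

theorem dist_le_sum_dist_fin {n : ℕ} (p : Fin (n + 1) → X) :
    dist (p 0) (p (Fin.last n)) ≤ ∑ i : Fin n, dist (p i.castSucc) (p i.succ) := by
  induction n with
  | zero => simp
  | succ n ih =>
    calc dist (p 0) (p (Fin.last n).succ)
        ≤ dist (p 0) (p (Fin.last n).castSucc) +
            dist (p (Fin.last n).castSucc) (p (Fin.last n).succ) := dist_triangle _ _ _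
      _ ≤ ∑ i : Fin n, dist (p i.castSucc.castSucc) (p i.succ.castSucc) +
            dist (p (Fin.last n).castSucc) (p (Fin.last n).succ) := by
          gcongr
          exact ih (p ∘ Fin.castSucc)
      _ = ∑ i : Fin (n + 1), dist (p i.castSucc) (p i.succ) := by
          rw [Fin.sum_univ_castSucc]; rfl

theorem IsNonBasicChain.exists_metricSbtw {x x' : X} (h : IsNonBasicChain x x') :
    ∃ y, MetricSbtw x y x' := by
  obtain ⟨k, p, hk, hinj, rfl, rfl, hsum⟩ := h
  refine ⟨p 1, fun h ↦ ?_, fun h ↦ ?_, ?_⟩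
  · simpa [Fin.ext_iff] using hinj h
  · have := hinj h
    simp [Fin.ext_iff] at this
    omega
  · have htail := dist_le_sum_dist_fin (Fin.tail p)
    simp only [Fin.tail, Fin.succ_castSucc] at htail
    rw [Fin.sum_univ_succ] at hsum
    have := dist_triangle (p 0) (p 1) (p (Fin.last (k + 1)))
    simp only [Fin.castSucc_zero, Fin.succ_zero_eq_one, Fin.succ_last] at hsum htail
    linarith

theorem IsNonBasicChain.of_metricSbtw {x y x' : X} (hx : x ≠ x') (h : MetricSbtw x y x') :
    IsNonBasicChain x x' := by
  obtain ⟨hyx, hyx', hd⟩ := h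
  refine ⟨1, ![x, y, x'], le_rfl, ?_, rfl, rfl, ?_⟩
  · intro a b hab
    fin_cases a <;> fin_cases b <;> simp_all [eq_comm]
  · simp [Fin.sum_univ_two, hd]

theorem isBasicEdge_iff {x x' : X} : IsBasicEdge x x' ↔ x ≠ x' ∧ ∀ y, ¬ MetricSbtw x y x' := by
  refine and_congr_right fun hx ↦ ⟨fun h y hy ↦ h (.inl (.of_metricSbtw hx hy)), ?_⟩
  rintro h (h' | h')
  · obtain ⟨y, hy⟩ := h'.exists_metricSbtw
    exact h y hy
  · obtain ⟨y, hy⟩ := h'.exists_metricSbtw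
    exact h y hy.symm

theorem basicGeodesicGraph_reachable [Finite X] (x y : X) :
    (basicGeodesicGraph X).Reachable x y := by
  let r (p q : X × X) : Prop := dist p.1 p.2 < dist q.1 q.2
  have : IsTrans (X × X) r := ⟨fun _ _ _ ↦ lt_trans⟩
  have : Std.Irrefl r := ⟨fun _ ↦ lt_irrefl _⟩
  refine (Finite.wellFounded_of_trans_of_irrefl r).induction
    (C := fun q ↦ (basicGeodesicGraph X).Reachable q.1 q.2) (x, y) ?_
  rintro ⟨x, y⟩ ih
  by_cases hxy : x = y
  · exact hxy ▸ .rfl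
  by_cases hbasic : IsBasicEdge x y
  · exact SimpleGraph.Adj.reachable hbasic
  obtain ⟨z, hzx, hzy, hd⟩ : ∃ z, MetricSbtw x z y := by
    simpa [isBasicEdge_iff, hxy] using hbasic
  have hxz := dist_pos.2 hzx.symm
  have hzy := dist_pos.2 hzy
  exact (ih (x, z) (show dist x z < dist x y by linarith)).trans
    (ih (z, y) (show dist z y < dist x y by linarith))

theorem FourthPointCondition.exists_median (h4 : FourthPointCondition X) (x y z : X) :
    ∃ p, dist x p + dist p y = dist x y ∧ dist p y + dist p z = dist y z ∧
      dist x p + dist p z = dist x z := by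
  obtain ⟨p, hp⟩ := h4 x y z
  have hxy := dist_triangle x p y
  have hyz := dist_triangle y p z
  have hxz := dist_triangle x p z
  rw [dist_comm y p, dist_comm z p, dist_comm z x] at hp
  rw [dist_comm y p] at hyz
  exact ⟨p, by linarith, by linarith, by linarith⟩

theorem IsBasicEdge.dist_eq_add_or_dist_eq_add (h4 : FourthPointCondition X) {a b : X}
    (hab : IsBasicEdge a b) (w : X) :
    dist a w = dist a b + dist b w ∨ dist b w = dist a b + dist a w := by
  obtain ⟨p, hpab, hpbw, hpaw⟩ := h4.exists_median a b w
  by_cases hpa : p = a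
  · subst hpa
    right
    exact hpbw.symm
  by_cases hpb : p = b
  · subst hpb
    left
    linarith
  exact absurd ⟨hpa, hpb, hpab⟩ ((isBasicEdge_iff.1 hab).2 p)

variable (X) in
def distLTGraph (r : ℝ) : SimpleGraph X where
  Adj u v := u ≠ v ∧ dist u v < r
  symm := ⟨fun u v h ↦ ⟨h.1.symm, dist_comm u v ▸ h.2⟩⟩
  loopless := ⟨fun _ h ↦ h.1 rfl⟩

@[simp]
theorem distLTGraph_adj {r : ℝ} {u v : X} : (distLTGraph X r).Adj u v ↔ u ≠ v ∧ dist u v < r :=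
  Iff.rfl

theorem IsBasicEdge.not_reachable_distLTGraph (h4 : FourthPointCondition X) {a b : X}
    (hab : IsBasicEdge a b) : ¬ (distLTGraph X (dist a b)).Reachable b a := by
  intro hreach
  have hside : ∀ w, Relation.ReflTransGen (distLTGraph X (dist a b)).Adj b w →
      dist a w = dist a b + dist b w := by
    intro w hw
    induction hw with
    | refl => simp
    | @tail v w _ hvw ih =>
      refine (hab.dist_eq_add_or_dist_eq_add h4 w).resolve_right fun hwa ↦ ?_
      have := dist_triangle a w v
      have := dist_triangle b v w
      have := dist_comm v w
      linarith [(distLTGraph_adj.1 hvw).2]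
  have haa := hside a ((SimpleGraph.reachable_iff_reflTransGen b a).1 hreach)
  rw [dist_self, dist_comm b a] at haa
  exact hab.1 (dist_eq_zero.1 (by linarith))

theorem TieBreakingRule.dist_ne (htie : TieBreakingRule X) {x y u v : X} (hxy : x ≠ y)
    (huv : u ≠ v) (h : s(x, y) ≠ s(u, v)) : dist x y ≠ dist u v :=
  htie x y u v hxy huv fun hset ↦ h (Sym2.eq_iff.2 (Set.pair_eq_pair_iff.1 hset))

theorem basicGeodesicGraph_isAcyclic (htie : TieBreakingRule X) (h4 : FourthPointCondition X) :
    (basicGeodesicGraph X).IsAcyclic := by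
  intro v c hc
  classical
  let edgeLength : Sym2 X → ℝ := Sym2.lift ⟨dist, dist_comm⟩
  obtain ⟨e, he, hmax⟩ := c.edges.toFinset.exists_max_image edgeLength
    ⟨_, List.mem_toFinset.2 (List.getLast_mem (SimpleGraph.Walk.edges_eq_nil.not.2 hc.not_nil))⟩
  induction e using Sym2.ind with | _ a b => ?_
  rw [List.mem_toFinset] at he
  let H := SimpleGraph.fromEdgeSet {e | e ∈ c.edges}
  have hH : ∀ e ∈ c.edges, e ∈ H.edgeSet := fun e he ↦ by
    rw [SimpleGraph.edgeSet_fromEdgeSet]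
    exact ⟨he, (basicGeodesicGraph X).not_isDiag_of_mem_edgeSet (c.edges_subset_edgeSet he)⟩
  have hreach : (H.deleteEdges {s(a, b)}).Reachable a b :=
    (SimpleGraph.adj_and_reachable_delete_edges_iff_exists_cycle.2
      ⟨v, c.transfer H hH, hc.transfer hH, by rwa [SimpleGraph.Walk.edges_transfer]⟩).2
  refine (c.adj_of_mem_edges he).not_reachable_distLTGraph h4 (hreach.symm.mono fun u w huw ↦ ?_)
  simp only [SimpleGraph.deleteEdges_adj, SimpleGraph.fromEdgeSet_adj, Set.mem_ofPred_eq,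
    Set.mem_singleton_iff, H] at huw
  obtain ⟨⟨huw, hne⟩, hab⟩ := huw
  exact ⟨hne, (hmax _ (List.mem_toFinset.2 huw)).lt_of_ne
    (htie.dist_ne hne (c.adj_of_mem_edges he).1 hab)⟩

end Geodesic

/-- Under the tie-breaking rule, the fourth-point condition implies that the basic
geodesic graph of a finite metric space is a tree. -/
theorem basicGeodesicGraph_isTree_of_fourthPointCondition
    {X : Type*} [MetricSpace X] [Fintype X] [Nonempty X]
    (htie : TieBreakingRule X) (h4 : FourthPointCondition X) :
    (basicGeodesicGraph X).IsTree :=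
  ⟨⟨basicGeodesicGraph_reachable⟩, basicGeodesicGraph_isAcyclic htie h4⟩
end

section
/- Let (X,d) be a metric space whose underlying set X is finite and nonempty. If (X,d) satisfies the fourth-point condition, then the basic geodesic graph of (X,d) is triangle-free: there are no three pairwise distinct points x,y,z ∈ X such that {x,y}, {y,z}, and {z,x} are all basic edges. -/
lemma chain_of_mid_s14 {X : Type*} [MetricSpace X] (u v w : X)
    (h1 : u ≠ v) (h2 : v ≠ w) (h3 : u ≠ w)
    (hd : dist u w = dist u v + dist v w) : IsNonBasicChain u w := by
  refine ⟨1, ![u, v, w], le_refl 1, ?_, rfl, rfl, ?_⟩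
  · intro i j hij
    fin_cases i <;> fin_cases j <;> simp_all <;>
      first
        | rfl
        | exact absurd hij h1 | exact absurd hij.symm h1
        | exact absurd hij h2 | exact absurd hij.symm h2
        | exact absurd hij h3 | exact absurd hij.symm h3
  · rw [Fin.sum_univ_two]
    convert hd using 2 <;> rfl

/-- The fourth-point condition implies that the basic geodesic graph is
triangle-free. -/
theorem basicGeodesicGraph_triangle_free_of_fourthPointCondition
    {X : Type*} [MetricSpace X] [Fintype X] [Nonempty X]
    (h4 : FourthPointCondition X) :
    ¬ ∃ x y z : X, x ≠ y ∧ y ≠ z ∧ z ≠ x ∧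
      IsBasicEdge x y ∧ IsBasicEdge y z ∧ IsBasicEdge z x := by
  rintro ⟨x, y, z, hxy, hyz, hzx, hbxy, hbyz, hbzx⟩
  obtain ⟨p, hp⟩ := h4 x y z
  have t1 : dist x y ≤ dist x p + dist y p := by
    have := dist_triangle x p y; rw [dist_comm p y] at this; linarith
  have t2 : dist y z ≤ dist y p + dist z p := by
    have := dist_triangle y p z; rw [dist_comm p z] at this; linarith
  have t3 : dist z x ≤ dist z p + dist x p := by
    have := dist_triangle z p x; rw [dist_comm p x] at this; linarith
  have e1 : dist x y = dist x p + dist y p := by linarith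
  have e2 : dist y z = dist y p + dist z p := by linarith
  have e3 : dist z x = dist z p + dist x p := by linarith
  by_cases hpx : p = x
  · subst hpx
    exact hbyz.2 (Or.inl (chain_of_mid_s14 y p z hxy.symm (fun h => hzx h.symm) hyz
      (by rw [e2, dist_comm z p])))
  by_cases hpy : p = y
  · subst hpy
    exact hbzx.2 (Or.inl (chain_of_mid_s14 z p x hyz.symm (fun h => hxy h.symm) hzx
      (by rw [e3, dist_comm x p])))
  by_cases hpz : p = z
  · subst hpz
    exact hbxy.2 (Or.inl (chain_of_mid_s14 x p y (fun h => hzx h.symm) (fun h => hyz h.symm) hxy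
      (by rw [e1, dist_comm y p])))
  · exact hbxy.2 (Or.inl (chain_of_mid_s14 x p y (fun h => hpx h.symm) (fun h => hpy h) hxy
      (by rw [e1, dist_comm y p])))
end

section
/- Let (X,d) be a metric space whose underlying set X is finite and nonempty. If (X,d) satisfies the three-point condition, then (X,d) satisfies the fourth-point condition. -/
/-- The three-point condition. -/
def ThreePointCondition (X : Type*) [MetricSpace X] : Prop :=
  ∀ x y z : X, max (dist x y) (max (dist y z) (dist z x)) =
    (dist x y + dist y z + dist z x) / 2

/-- The three-point condition implies the fourth-point condition. -/
theorem fourthPointCondition_of_threePointCondition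
    {X : Type*} [MetricSpace X] [Fintype X] [Nonempty X]
    (h3 : ThreePointCondition X) : FourthPointCondition X := by
  intro x y z
  have h := h3 x y z
  rcases le_total (dist x y) (max (dist y z) (dist z x)) with h1 | h1
  · rw [max_eq_right h1] at h
    rcases le_total (dist y z) (dist z x) with h2 | h2
    · rw [max_eq_right h2] at h
      exact ⟨y, by simp [dist_comm]; linarith [dist_comm z x, dist_comm y z, dist_comm x y]⟩
    · rw [max_eq_left h2] at h
      exact ⟨x, by simp [dist_comm]; linarith [dist_comm z x, dist_comm y z, dist_comm x y]⟩
  · rw [max_eq_left h1] at h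
    exact ⟨z, by simp [dist_comm]; linarith [dist_comm z x, dist_comm y z, dist_comm x y]⟩
end
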